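/- arXiv:2404.00187 — 2 statements merged into one kernel-verified Lean document; each statement's English description precedes it below -/
import Mathlib

section
/- Let A be the adjacency matrix of a finite simple undirected graph, D its degree matrix, and define P₀ = I, P₁ = A, P₂ = A² − D, and for k ≥ 3, P_k = A·P_{k−1} − (D − I)·P_{k−2}. Then (P_k)_{ij} equals the number of non-backtracking walks of length k from i to j. -/
/-!
Write `N_k` for the matrix of numbers of non-backtracking walks of length `k`. The entry
`(A N_{k+1})_{ij}` counts pairs `(l, u)` of a neighbour `l` of `i` and a non-backtracking walk `u`
of length `k + 1` from `l` to `j`. Prepending `i` to `u` gives a non-backtracking walk of length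
`k + 2` from `i`, unless `u` steps straight back to `i`. Such a `u` is `l` followed by a
non-backtracking walk `v` of length `k` from `i` to `j`, where `l` is any neighbour of `i` other
than the second vertex of `v` (`deg i - 1` choices) if `k ≥ 1`, and any neighbour of `i` if
`k = 0` (which forces `j = i`). So `A N_1 = N_2 + D N_0` and
`A N_{k+2} = N_{k+3} + (D - I) N_{k+1}`, which together with `N_0 = I` and `N_1 = A` is the
recursion defining `P_k`.
-/

/-- Number of non-backtracking walks of length `k` from `i` to `j` in the graph with
adjacency matrix `A`. -/
noncomputable def nbtwCount {n : ℕ} (A : Matrix (Fin n) (Fin n) ℝ) (k : ℕ) (i j : Fin n) : ℕ :=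
  Nat.card {w : Fin (k + 1) → Fin n //
    w 0 = i ∧ w (Fin.last k) = j ∧ (∀ m : Fin k, A (w m.castSucc) (w m.succ) = 1) ∧
      ∀ m : Fin (k + 1), ∀ h : (m : ℕ) + 2 ≤ k, w ⟨(m : ℕ) + 2, by omega⟩ ≠ w m}

/-- The NBTW matrix recursion: `P₀ = I`, `P₁ = A`, `P₂ = A² − D`,
`P_k = A P_{k−1} − (D − I) P_{k−2}` for `k ≥ 3`. -/
noncomputable def nbtwP {n : ℕ} (A D : Matrix (Fin n) (Fin n) ℝ) : ℕ → Matrix (Fin n) (Fin n) ℝ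
  | 0 => 1
  | 1 => A
  | 2 => A * A - D
  | (k + 3) => A * nbtwP A D (k + 2) - (D - 1) * nbtwP A D (k + 1)

namespace NonBacktracking

variable {V : Type*} (r : V → V → Prop)

/-- Written exactly as in `nbtwCount`, so that `nbtwCount A k i j` is
`Nat.card (nbWalks (A · · = 1) k i j)` by `rfl`. -/
def IsWalk {k : ℕ} (w : Fin (k + 1) → V) : Prop :=
  (∀ m : Fin k, r (w m.castSucc) (w m.succ)) ∧
    ∀ m : Fin (k + 1), ∀ h : (m : ℕ) + 2 ≤ k, w ⟨(m : ℕ) + 2, by omega⟩ ≠ w m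

def nbWalks (k : ℕ) (i j : V) : Set (Fin (k + 1) → V) :=
  {w | w 0 = i ∧ w (Fin.last k) = j ∧ IsWalk r w}

def neighborWalks (k : ℕ) (i j : V) : Set (V × (Fin (k + 1) → V)) :=
  {p | r i p.1 ∧ p.2 ∈ nbWalks r k p.1 j}

variable {r}

theorem isWalk_zero (w : Fin 1 → V) : IsWalk r w :=
  ⟨fun m => m.elim0, fun _ h => absurd h (by omega)⟩

theorem isWalk_one (w : Fin 2 → V) : IsWalk r w ↔ r (w 0) (w 1) := by
  simp [IsWalk]

theorem isWalk_cons {k : ℕ} (x : V) (v : Fin (k + 2) → V) :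
    IsWalk r (Fin.cons x v : Fin (k + 3) → V) ↔ r x (v 0) ∧ v 1 ≠ x ∧ IsWalk r v := by
  unfold IsWalk
  rw [Fin.forall_fin_succ (n := k + 1), Fin.forall_fin_succ (n := k + 2)]
  simp only [Fin.castSucc_zero, Fin.cons_zero, Fin.succ_zero_eq_one, Fin.cons_one,
    ← Fin.succ_castSucc, Fin.cons_succ]
  constructor
  · rintro ⟨⟨h0, hs⟩, n0, ns⟩
    exact ⟨h0, n0 (by simp), hs, fun m hm => ns m (by simp; omega)⟩
  · rintro ⟨h0, n0, hs, ns⟩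
    exact ⟨⟨h0, hs⟩, fun _ => n0, fun m hm => ns m (by simpa using hm)⟩

theorem mem_nbWalks_add_two_iff {k : ℕ} {i j : V} {w : Fin (k + 3) → V} :
    w ∈ nbWalks r (k + 2) i j ↔
      w 0 = i ∧ r i (w 1) ∧ w 2 ≠ i ∧ Fin.tail w ∈ nbWalks r (k + 1) (w 1) j := by
  obtain ⟨x, v, rfl⟩ : ∃ x v, w = Fin.cons x v := ⟨_, _, (Fin.cons_self_tail w).symm⟩
  change _ ∧ _ ∧ _ ↔
    x = i ∧ r i (v 0) ∧ v 1 ≠ i ∧ v 0 = v 0 ∧ v (Fin.last (k + 1)) = j ∧ _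
  rw [isWalk_cons]
  constructor
  · rintro ⟨rfl, hj, h⟩
    exact ⟨rfl, h.1, h.2.1, rfl, hj, h.2.2⟩
  · rintro ⟨rfl, h1, h2, -, hj, hv⟩
    exact ⟨rfl, hj, h1, h2, hv⟩

theorem cons_tail_of_mem_nbWalks {k : ℕ} {i j : V} {w : Fin (k + 2) → V}
    (hw : w ∈ nbWalks r (k + 1) i j) : Fin.cons i (Fin.tail w) = w := by
  rw [← hw.1]
  exact Fin.cons_self_tail w

theorem rel_apply_one_of_mem_nbWalks {k : ℕ} {i j : V} {w : Fin (k + 2) → V}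
    (hw : w ∈ nbWalks r (k + 1) i j) : r i (w 1) :=
  hw.1 ▸ hw.2.2.1 0

theorem card_nbWalks_zero [DecidableEq V] (i j : V) :
    Nat.card (nbWalks r 0 i j) = if i = j then 1 else 0 := by
  split_ifs with h
  · subst h
    have : nbWalks r 0 i i = {fun _ => i} := by
      ext w
      constructor
      · rintro ⟨h0, -, -⟩
        funext m
        rwa [Fin.fin_one_eq_zero m]
      · rintro rfl
        exact ⟨rfl, rfl, isWalk_zero _⟩
    rw [this, Nat.card_unique]
  · rw [Nat.card_eq_zero]
    left
    constructor
    rintro ⟨w, hi, hj, -⟩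
    exact h (hi ▸ hj)

theorem card_nbWalks_one [DecidableRel r] (i j : V) :
    Nat.card (nbWalks r 1 i j) = if r i j then 1 else 0 := by
  split_ifs with h
  · have : nbWalks r 1 i j = {![i, j]} := by
      ext w
      constructor
      · rintro ⟨h0, h1, -⟩
        funext m
        fin_cases m
        exacts [h0, h1]
      · rintro rfl
        exact ⟨rfl, rfl, (isWalk_one _).2 h⟩
    rw [this, Nat.card_unique]
  · rw [Nat.card_eq_zero]
    left
    constructor
    rintro ⟨w, hi, hj, hw⟩
    exact h (hi ▸ hj ▸ (isWalk_one w).1 hw)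

theorem card_neighborWalks [Fintype V] [DecidableRel r] (k : ℕ) (i j : V) :
    Nat.card (neighborWalks r k i j) = ∑ l, if r i l then Nat.card (nbWalks r k l j) else 0 := by
  calc Nat.card (neighborWalks r k i j)
      = Nat.card (Σ l, {w // r i l ∧ w ∈ nbWalks r k l j}) :=
        Nat.card_congr <|
          Equiv.subtypeProdEquivSigmaSubtype fun l w => r i l ∧ w ∈ nbWalks r k l j
    _ = _ := Nat.card_sigma
    _ = _ := Finset.sum_congr rfl fun l _ => by split_ifs with h <;> simp [h]

def neighborWalksSdiffEquiv (k : ℕ) (i j : V) :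
    ↥(neighborWalks r (k + 1) i j \ {p | p.2 1 = i}) ≃ nbWalks r (k + 2) i j where
  toFun p := ⟨Fin.cons i p.1.2, by
    obtain ⟨⟨l, u⟩, ⟨hl, hu⟩, hne⟩ := p
    rw [← hu.1] at hl hu
    exact mem_nbWalks_add_two_iff.2 ⟨rfl, hl, hne, hu⟩⟩
  invFun w := ⟨(w.1 1, Fin.tail w.1), by
    obtain ⟨-, hl, hne, hu⟩ := mem_nbWalks_add_two_iff.1 w.2
    exact ⟨⟨hl, hu⟩, hne⟩⟩
  left_inv p := Subtype.ext (Prod.ext p.2.1.2.1 rfl)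
  right_inv w := Subtype.ext (cons_tail_of_mem_nbWalks w.2)

def neighborWalksInterEquiv [Std.Symm r] (k : ℕ) (i j : V) :
    ↥(neighborWalks r (k + 2) i j ∩ {p | p.2 1 = i}) ≃
      Σ v : nbWalks r (k + 1) i j, {l // r i l ∧ l ≠ v.1 1} where
  toFun p := ⟨⟨Fin.tail p.1.2, by
      obtain ⟨-, -, -, hu⟩ := mem_nbWalks_add_two_iff.1 p.2.1.2
      rwa [p.2.2] at hu⟩, p.1.1, p.2.1.1, (mem_nbWalks_add_two_iff.1 p.2.1.2).2.2.1.symm⟩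
  invFun q := ⟨(q.2.1, Fin.cons q.2.1 q.1.1), by
    obtain ⟨⟨v, hv⟩, l, hl, hne⟩ := q
    refine ⟨⟨hl, mem_nbWalks_add_two_iff.2 ⟨rfl, ?_, hne.symm, ?_⟩⟩, hv.1⟩
    · show r l (v 0)
      rw [hv.1]
      exact symm_of r hl
    · show v ∈ nbWalks r (k + 1) (v 0) j
      rwa [hv.1]⟩
  left_inv p := Subtype.ext (Prod.ext rfl (cons_tail_of_mem_nbWalks p.2.1.2))
  right_inv q := rfl

theorem card_neighborWalks_add_one [Finite V] (k : ℕ) (i j : V) :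
    Nat.card (neighborWalks r (k + 1) i j) =
      Nat.card (nbWalks r (k + 2) i j) +
        Nat.card ↥(neighborWalks r (k + 1) i j ∩ {p | p.2 1 = i}) := by
  rw [← Nat.card_congr (neighborWalksSdiffEquiv k i j)]
  simp only [Nat.card_coe_set_eq]
  exact (Set.ncard_inter_add_ncard_sdiff_eq_ncard _ _).symm.trans (add_comm _ _)

theorem card_neighborWalks_one_inter [Std.Symm r] [DecidableEq V] (i j : V) :
    Nat.card ↥(neighborWalks r 1 i j ∩ {p | p.2 1 = i}) =
      if i = j then Nat.card {l // r i l} else 0 := by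
  split_ifs with h
  · subst h
    refine Nat.card_congr
      { toFun := fun p => ⟨p.1.1, p.2.1.1⟩
        invFun := fun l =>
          ⟨(l.1, ![l.1, i]), ⟨l.2, rfl, rfl, (isWalk_one _).2 (symm_of r l.2)⟩, rfl⟩
        left_inv := fun p => ?_
        right_inv := fun l => rfl }
    obtain ⟨⟨l, u⟩, ⟨hl, hu0, -, -⟩, hu1⟩ := p
    ext : 2
    · rfl
    · show ![l, i] = u
      funext m
      fin_cases m
      exacts [hu0.symm, hu1.symm]
  · rw [Nat.card_eq_zero]
    left
    constructor
    rintro ⟨⟨l, u⟩, ⟨-, -, hj, -⟩, hi⟩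
    exact h (hi.symm.trans hj)

theorem card_sigma_ne_add_card {W : Type*} [Finite W] [Finite V] {p : V → Prop} (f : W → V)
    (hf : ∀ w, p (f w)) :
    Nat.card (Σ w, {l // p l ∧ l ≠ f w}) + Nat.card W = Nat.card W * Nat.card {l // p l} := by
  have := Fintype.ofFinite W
  have hcard (w : W) : Nat.card {l // p l ∧ l ≠ f w} + 1 = Nat.card {l // p l} :=
    Set.ncard_sdiff_singleton_add_one (s := {l | p l}) (hf w)
  calc Nat.card (Σ w, {l // p l ∧ l ≠ f w}) + Nat.card W
      = ∑ w, (Nat.card {l // p l ∧ l ≠ f w} + 1) := by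
        rw [Nat.card_sigma, Finset.sum_add_distrib, Finset.sum_const, smul_eq_mul, mul_one,
          Finset.card_univ, Nat.card_eq_fintype_card (α := W)]
    _ = Nat.card W * Nat.card {l // p l} := by
        rw [Finset.sum_congr rfl fun w _ => hcard w, Finset.sum_const, smul_eq_mul,
          Finset.card_univ, Nat.card_eq_fintype_card (α := W)]

theorem card_nbWalks_two_add [Fintype V] [DecidableEq V] [DecidableRel r] [Std.Symm r] (i j : V) :
    Nat.card (nbWalks r 2 i j) + (if i = j then Nat.card {l // r i l} else 0) =
      ∑ l, if r i l then Nat.card (nbWalks r 1 l j) else 0 := by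
  rw [← card_neighborWalks, card_neighborWalks_add_one, card_neighborWalks_one_inter]

theorem card_nbWalks_add_three_add [Fintype V] [DecidableRel r] [Std.Symm r] (k : ℕ) (i j : V) :
    Nat.card (nbWalks r (k + 3) i j) + Nat.card (nbWalks r (k + 1) i j) * Nat.card {l // r i l} =
      (∑ l, if r i l then Nat.card (nbWalks r (k + 2) l j) else 0) +
        Nat.card (nbWalks r (k + 1) i j) := by
  rw [← card_neighborWalks, card_neighborWalks_add_one,
    Nat.card_congr (neighborWalksInterEquiv k i j),
    ← card_sigma_ne_add_card _ fun v => rel_apply_one_of_mem_nbWalks v.2]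
  exact (add_assoc _ _ _).symm

section Matrix

variable (r) in
noncomputable def walkCountMatrix (k : ℕ) : Matrix V V ℝ :=
  Matrix.of fun i j => (Nat.card (nbWalks r k i j) : ℝ)

theorem walkCountMatrix_zero [DecidableEq V] : walkCountMatrix r 0 = 1 := by
  ext i j
  rw [walkCountMatrix, Matrix.of_apply, card_nbWalks_zero, Matrix.one_apply, Nat.cast_ite,
    Nat.cast_one, Nat.cast_zero]

variable [DecidableRel r]

variable (r) in
def relMatrix : Matrix V V ℝ :=
  Matrix.of fun i j => if r i j then 1 else 0

theorem relMatrix_mul_apply [Fintype V] (M : Matrix V V ℝ) (i j : V) :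
    (relMatrix r * M) i j = ∑ l, if r i l then M l j else 0 := by
  simp [Matrix.mul_apply, relMatrix]

theorem sum_relMatrix_apply [Fintype V] (i : V) :
    ∑ j, relMatrix r i j = Nat.card {j // r i j} := by
  simp [relMatrix, Finset.sum_boole, Nat.card_eq_fintype_card, Fintype.card_subtype]

theorem walkCountMatrix_one : walkCountMatrix r 1 = relMatrix r := by
  ext i j
  rw [walkCountMatrix, Matrix.of_apply, card_nbWalks_one, Nat.cast_ite, Nat.cast_one,
    Nat.cast_zero, relMatrix, Matrix.of_apply]

theorem walkCountMatrix_two [Fintype V] [DecidableEq V] [Std.Symm r] :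
    walkCountMatrix r 2 =
      relMatrix r * relMatrix r - Matrix.diagonal fun i => ∑ j, relMatrix r i j := by
  ext i j
  have h := congrArg (Nat.cast : ℕ → ℝ) (card_nbWalks_two_add (r := r) i j)
  push_cast at h
  rw [Matrix.sub_apply, relMatrix_mul_apply, Matrix.diagonal_apply, sum_relMatrix_apply,
    ← walkCountMatrix_one]
  simp only [walkCountMatrix, Matrix.of_apply]
  split_ifs at h ⊢ <;> linarith

theorem walkCountMatrix_add_three [Fintype V] [DecidableEq V] [Std.Symm r] (k : ℕ) :
    walkCountMatrix r (k + 3) =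
      relMatrix r * walkCountMatrix r (k + 2) -
        (Matrix.diagonal (fun i => ∑ j, relMatrix r i j) - 1) * walkCountMatrix r (k + 1) := by
  ext i j
  have h := congrArg (Nat.cast : ℕ → ℝ) (card_nbWalks_add_three_add (r := r) k i j)
  push_cast at h
  rw [Matrix.sub_apply, relMatrix_mul_apply, Matrix.sub_mul, Matrix.one_mul, Matrix.sub_apply,
    Matrix.diagonal_mul, sum_relMatrix_apply]
  simp only [walkCountMatrix, Matrix.of_apply]
  linarith

end Matrix

end NonBacktracking

theorem nbtwP_eq_of_recurrence {n : ℕ} {A D : Matrix (Fin n) (Fin n) ℝ}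
    {N : ℕ → Matrix (Fin n) (Fin n) ℝ} (h0 : N 0 = 1) (h1 : N 1 = A) (h2 : N 2 = A * A - D)
    (hstep : ∀ k, N (k + 3) = A * N (k + 2) - (D - 1) * N (k + 1)) (k : ℕ) :
    nbtwP A D k = N k := by
  induction k using nbtwP.induct with
  | case1 => rw [nbtwP, h0]
  | case2 => rw [nbtwP, h1]
  | case3 => rw [nbtwP, h2]
  | case4 k ih2 ih1 => rw [nbtwP, hstep, ih2, ih1]

open NonBacktracking in
theorem nbtwP_counts_nbtw_walks_general {n : ℕ} (A : Matrix (Fin n) (Fin n) ℝ)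
    (hsymm : A.IsSymm) (h01 : ∀ i j, A i j = 0 ∨ A i j = 1)
    (D : Matrix (Fin n) (Fin n) ℝ) (hD : D = Matrix.diagonal (fun i => ∑ j, A i j))
    (k : ℕ) (i j : Fin n) :
    (nbtwP A D k) i j = (nbtwCount A k i j : ℝ) := by
  -- instance search does not unfold the lambda by itself
  have : DecidableRel (A · · = 1) := fun _ _ => inferInstance
  have : Std.Symm (A · · = 1) := ⟨fun a b h => (hsymm.apply a b).trans h⟩
  have hA : relMatrix (A · · = 1) = A := by
    ext a b
    rcases h01 a b with h | h <;> simp [relMatrix, h]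
  have hN : nbtwP A D k = walkCountMatrix (A · · = 1) k :=
    nbtwP_eq_of_recurrence walkCountMatrix_zero (by rw [walkCountMatrix_one, hA])
      (by rw [walkCountMatrix_two, hA, hD]) (fun k => by rw [walkCountMatrix_add_three, hA, hD]) k
  rw [hN]
  rfl

theorem nbtwP_counts_nbtw_walks {n : ℕ} (A : Matrix (Fin n) (Fin n) ℝ)
    (hsymm : A.IsSymm) (h01 : ∀ i j, A i j = 0 ∨ A i j = 1) (hdiag : ∀ i, A i i = 0)
    (D : Matrix (Fin n) (Fin n) ℝ) (hD : D = Matrix.diagonal (fun i => ∑ j, A i j))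
    (k : ℕ) (i j : Fin n) :
    (nbtwP A D k) i j = (nbtwCount A k i j : ℝ) :=
  nbtwP_counts_nbtw_walks_general A hsymm h01 D hD k i j
end

section
/- Let A be the adjacency matrix of a finite simple undirected graph, D its degree matrix, and let P_k be the matrices counting non-backtracking walks of length k (satisfying the recurrence P_k = A P_{k−1} − (D−I) P_{k−2} for k ≥ 3, with P₀ = I, P₁ = A, P₂ = A² − D). Then as formal power series (or for α small enough), (1 − α²)(I − αA + α²(D − I))^{-1} = Σ_{k=0}^∞ α^k P_k. -/
/-!
For small `α` the series `S = ∑ α ^ k • P k` converges, because a sequence obeying a two-term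
linear recurrence grows at most geometrically. Multiplying `S` by
`M(α) = 1 - α A + α² (D - 1)` and collecting powers of `α`, the coefficient of `α ^ (k + 2)` is
`P (k + 2) - A P (k + 1) + (D - 1) P k`, which the recurrence kills except at `k = 0`, where it
is `-1`; the coefficients of `1` and `α` are `P 0 = 1` and `P 1 - A P 0 = 0`. Hence
`M(α) S = (1 - α²) I`, which also makes `M(α)` invertible.
-/

open Finset

section Recurrence

variable {R : Type*}

theorem norm_le_of_two_term_recurrence [SeminormedRing R] {a b : R} {p : ℕ → R}
    (hp : ∀ k, p (k + 2) = a * p (k + 1) - b * p k) (k : ℕ) :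
    ‖p k‖ ≤ max ‖p 1‖ ‖p 0‖ * (‖a‖ + ‖b‖ + 1) ^ k := by
  set B := ‖a‖ + ‖b‖ + 1
  have hB : 1 ≤ B := by unfold B; linarith [norm_nonneg a, norm_nonneg b]
  have hstep : ∀ j, max ‖p (j + 2)‖ ‖p (j + 1)‖ ≤ B * max ‖p (j + 1)‖ ‖p j‖ := by
    intro j
    have hmax : 0 ≤ max ‖p (j + 1)‖ ‖p j‖ := le_max_of_le_right (norm_nonneg _)
    refine max_le ?_ (le_trans (le_max_left _ _) (le_mul_of_one_le_left hmax hB))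
    calc ‖p (j + 2)‖ ≤ ‖a‖ * ‖p (j + 1)‖ + ‖b‖ * ‖p j‖ := by
          rw [hp]; exact (norm_sub_le _ _).trans (add_le_add (norm_mul_le _ _) (norm_mul_le _ _))
      _ ≤ ‖a‖ * max ‖p (j + 1)‖ ‖p j‖ + ‖b‖ * max ‖p (j + 1)‖ ‖p j‖ := by
          gcongr
          exacts [le_max_left _ _, le_max_right _ _]
      _ ≤ B * max ‖p (j + 1)‖ ‖p j‖ := by unfold B; nlinarith
  have hgeom := le_geom (u := fun j => max ‖p (j + 1)‖ ‖p j‖) (by positivity) k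
    (fun j _ => hstep j)
  rw [mul_comm]
  exact (le_max_right _ _).trans hgeom

theorem summable_pow_smul_of_two_term_recurrence [NormedRing R] [NormedSpace ℝ R]
    [CompleteSpace R] {a b : R} {p : ℕ → R} (hp : ∀ k, p (k + 2) = a * p (k + 1) - b * p k)
    {α : ℝ} (hα : |α| * (‖a‖ + ‖b‖ + 1) < 1) :
    Summable fun k => α ^ k • p k := by
  refine .of_norm_bounded
    ((summable_geometric_of_lt_one (by positivity) hα).mul_left (max ‖p 1‖ ‖p 0‖)) fun k => ?_
  rw [norm_smul, norm_pow, Real.norm_eq_abs, mul_pow, mul_left_comm]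
  exact mul_le_mul_of_nonneg_left (norm_le_of_two_term_recurrence hp k) (by positivity)

theorem HasSum.two_term_shift [Ring R] [TopologicalSpace R] [IsTopologicalRing R]
    {f : ℕ → R} {s : R} (hf : HasSum f s) (x y : R) :
    HasSum (fun k => f (k + 2) - x * f (k + 1) + y * f k)
      ((1 - x + y) * s - (f 0 + f 1 - x * f 0)) := by
  have h2 := (hasSum_nat_add_iff' 2).mpr hf
  have h1 := (hasSum_nat_add_iff' 1).mpr hf
  have hvalue : s - ∑ i ∈ range 2, f i - x * (s - ∑ i ∈ range 1, f i) + y * s =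
      (1 - x + y) * s - (f 0 + f 1 - x * f 0) := by
    simp only [sum_range_succ, sum_range_zero]
    noncomm_ring
  exact hvalue ▸ (h2.sub (h1.mul_left x)).add (hf.mul_left y)

theorem HasSum.pow_smul_two_term_shift {𝕜 : Type*} [CommRing 𝕜] [Ring R] [Algebra 𝕜 R]
    [TopologicalSpace R] [IsTopologicalRing R] {p : ℕ → R} {α : 𝕜} {s : R}
    (hs : HasSum (fun k => α ^ k • p k) s) (a b : R) :
    HasSum (fun k => α ^ (k + 2) • (p (k + 2) - a * p (k + 1) + b * p k))
      ((1 - α • a + α ^ 2 • b) * s - (p 0 + α • (p 1 - a * p 0))) := by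
  have hshift := hs.two_term_shift (α • a) (α ^ 2 • b)
  simp only [smul_mul_smul_comm, ← pow_succ', ← pow_add, add_comm 2, ← smul_sub, ← smul_add,
    pow_zero, pow_one, one_smul] at hshift
  rwa [add_sub_assoc, smul_mul_assoc, ← smul_sub] at hshift

end Recurrence

theorem Matrix.isUnit_and_eq_smul_inv_of_mul_eq_smul_one {ι 𝕜 : Type*} [Fintype ι]
    [DecidableEq ι] [Field 𝕜] {M S : Matrix ι ι 𝕜} {c : 𝕜} (hc : c ≠ 0) (h : M * S = c • 1) :
    IsUnit M ∧ S = c • M⁻¹ := by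
  have hright : M * (c⁻¹ • S) = 1 := by
    rw [mul_smul_comm, h, smul_smul, inv_mul_cancel₀ hc, one_smul]
  refine ⟨.of_mul_eq_one _ hright, ?_⟩
  rw [Matrix.inv_eq_right_inv hright, smul_smul, mul_inv_cancel₀ hc, one_smul]

attribute [local instance] Matrix.linftyOpNormedRing Matrix.linftyOpNormedAlgebra

theorem nbtw_generating_function_general {n : ℕ} (A : Matrix (Fin n) (Fin n) ℝ)
    (D : Matrix (Fin n) (Fin n) ℝ)
    (P : ℕ → Matrix (Fin n) (Fin n) ℝ)
    (hP0 : P 0 = 1) (hP1 : P 1 = A) (hP2 : P 2 = A * A - D)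
    (hPrec : ∀ k : ℕ, P (k + 3) = A * P (k + 2) - (D - 1) * P (k + 1)) :
    ∃ μ > (0 : ℝ), ∀ α : ℝ, 0 < α → α < μ →
      IsUnit (1 - α • A + (α ^ 2) • (D - 1)) ∧
      HasSum (fun k : ℕ => α ^ k • P k)
        ((1 - α ^ 2) • (1 - α • A + (α ^ 2) • (D - 1))⁻¹) := by
  refine ⟨1 / (‖A‖ + ‖D - 1‖ + 1), by positivity, fun α hα hαμ => ?_⟩
  have hαB : |α| * (‖A‖ + ‖D - 1‖ + 1) < 1 := by
    rwa [abs_of_pos hα, ← lt_div_iff₀ (by positivity)]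
  have hα1 : α < 1 := by nlinarith [norm_nonneg A, norm_nonneg (D - 1), abs_of_pos hα]
  obtain ⟨S, hS⟩ : Summable fun k => α ^ k • P k := by
    refine (summable_nat_add_iff 1).mp ?_
    have := (summable_pow_smul_of_two_term_recurrence (p := fun k => P (k + 1)) hPrec hαB).const_smul α
    simp only [pow_succ', mul_smul] at this ⊢
    exact this
  -- the recurrence fails only at `k = 0`, where `P 2 - A * P 1 + (D - 1) * P 0 = -1`
  have hdefect : (fun k => α ^ (k + 2) • (P (k + 2) - A * P (k + 1) + (D - 1) * P k)) =
      fun k => if k = 0 then -(α ^ 2 • 1) else 0 := by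
    funext k
    rcases k with _ | k
    · rw [if_pos rfl, hP0, hP1, hP2, mul_one]
      module
    · simp [hPrec]
  have hMS : (1 - α • A + α ^ 2 • (D - 1)) * S = (1 - α ^ 2) • 1 := by
    have h := (hS.pow_smul_two_term_shift A (D - 1)).unique (hdefect ▸ hasSum_ite_eq 0 _)
    rw [hP0, hP1, mul_one, sub_self, smul_zero, add_zero, sub_eq_iff_eq_add] at h
    rw [h]
    module
  obtain ⟨hunit, hSinv⟩ :=
    Matrix.isUnit_and_eq_smul_inv_of_mul_eq_smul_one (by nlinarith : (0 : ℝ) < 1 - α ^ 2).ne' hMS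
  exact ⟨hunit, hSinv ▸ hS⟩

theorem nbtw_generating_function {n : ℕ} (A : Matrix (Fin n) (Fin n) ℝ)
    (hsymm : A.IsSymm) (h01 : ∀ i j, A i j = 0 ∨ A i j = 1) (hdiag : ∀ i, A i i = 0)
    (D : Matrix (Fin n) (Fin n) ℝ) (hD : D = Matrix.diagonal (fun i => ∑ j, A i j))
    (P : ℕ → Matrix (Fin n) (Fin n) ℝ)
    (hP0 : P 0 = 1) (hP1 : P 1 = A) (hP2 : P 2 = A * A - D)
    (hPrec : ∀ k : ℕ, P (k + 3) = A * P (k + 2) - (D - 1) * P (k + 1)) :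
    ∃ μ > (0 : ℝ), ∀ α : ℝ, 0 < α → α < μ →
      IsUnit (1 - α • A + (α ^ 2) • (D - 1)) ∧
      HasSum (fun k : ℕ => α ^ k • P k)
        ((1 - α ^ 2) • (1 - α • A + (α ^ 2) • (D - 1))⁻¹) :=
  nbtw_generating_function_general A D P hP0 hP1 hP2 hPrec
end
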